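/- Let K = k1/k2 ∈ E(y) be nonzero differential-reduced with d1 = deg k1 = deg k2 − 1 = d2 − 1, and suppose τ = −lc(k1)/lc(k2) is a positive integer. Then for every polynomial p ∈ E[y] of degree exactly τ, deg(k2·D(p) + k1·p) < d1 + τ. -/

import Mathlib

open Polynomial

/-- `K = k1/k2` is differential-reduced: `gcd(k2, k1 - i·D(k2)) = 1` for all integers `i`. -/
def DiffReduced {E : Type*} [Field E] (k1 k2 : E[X]) : Prop :=
  ∀ i : ℤ, IsCoprime k2 (k1 - (i : E[X]) * derivative k2)

/-- The derivation `d/dy` on the field of rational functions `E(y)`. -/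
noncomputable def Dr {E : Type*} [Field E] (f : RatFunc E) : RatFunc E :=
  (algebraMap E[X] (RatFunc E) (derivative f.num) * algebraMap E[X] (RatFunc E) f.denom -
      algebraMap E[X] (RatFunc E) f.num * algebraMap E[X] (RatFunc E) (derivative f.denom)) /
    (algebraMap E[X] (RatFunc E) f.denom) ^ 2

section

variable {R : Type*} [CommSemiring R] {a b p : R[X]}

theorem natDegree_mul_derivative_add_mul_le (hab : a.natDegree + 1 = b.natDegree) :
    (b * derivative p + a * p).natDegree ≤ a.natDegree + p.natDegree := by
  refine natDegree_add_le_of_degree_le ?_ natDegree_mul_le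
  rcases Nat.eq_zero_or_pos p.natDegree with hp | hp
  · simp [derivative_of_natDegree_zero hp]
  · calc (b * derivative p).natDegree ≤ b.natDegree + (p.natDegree - 1) :=
          natDegree_mul_le.trans (Nat.add_le_add_left (natDegree_derivative_le p) _)
      _ = a.natDegree + p.natDegree := by omega

theorem coeff_mul_derivative_add_mul (hab : a.natDegree + 1 = b.natDegree) :
    (b * derivative p + a * p).coeff (a.natDegree + p.natDegree) =
      (a.leadingCoeff + p.natDegree * b.leadingCoeff) * p.leadingCoeff := by
  rw [coeff_add, coeff_mul_degree_add_degree]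
  rcases hp : p.natDegree with _ | m
  · simp [derivative_of_natDegree_zero hp]
  · have hsplit : a.natDegree + (m + 1) = b.natDegree + m := by omega
    have hder : (derivative p).natDegree ≤ m := by
      simpa [hp] using natDegree_derivative_le p
    have hlc : p.coeff (m + 1) = p.leadingCoeff := by rw [leadingCoeff, hp]
    rw [hsplit, coeff_mul_add_eq_of_natDegree_le le_rfl hder, coeff_derivative, coeff_natDegree, hlc]
    push_cast
    ring

theorem degree_mul_derivative_add_mul_lt (hab : a.natDegree + 1 = b.natDegree)
    (hlc : a.leadingCoeff + p.natDegree * b.leadingCoeff = 0) :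
    (b * derivative p + a * p).degree < ↑(a.natDegree + p.natDegree) := by
  refine (degree_lt_iff_coeff_zero _ _).2 fun m hm => ?_
  rcases hm.eq_or_lt with rfl | hlt
  · rw [coeff_mul_derivative_add_mul hab, hlc, zero_mul]
  · exact coeff_eq_zero_of_natDegree_lt ((natDegree_mul_derivative_add_mul_le hab).trans_lt hlt)

end

theorem stmt_16_general {E : Type*} [Field E] (k1 k2 : E[X])
    (hk2 : k2 ≠ 0)
    (hdeg : k1.natDegree + 1 = k2.natDegree) (τ : ℕ)
    (hτ : (τ : E) = -(k1.leadingCoeff / k2.leadingCoeff))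
    (p : E[X]) (hp : p.natDegree = τ) :
    (k2 * derivative p + k1 * p).degree < ((k1.natDegree + τ : ℕ) : WithBot ℕ) := by
  subst hp
  refine degree_mul_derivative_add_mul_lt hdeg ?_
  have hlc : k2.leadingCoeff ≠ 0 := leadingCoeff_ne_zero.2 hk2
  rw [hτ]
  field_simp
  ring

theorem stmt_16 {E : Type*} [Field E] [CharZero E] (k1 k2 : E[X]) (hk1 : k1 ≠ 0)
    (hk2 : k2 ≠ 0) (hcop : IsCoprime k1 k2) (hdr : DiffReduced k1 k2)
    (hdeg : k1.natDegree + 1 = k2.natDegree) (τ : ℕ) (hτpos : 0 < τ)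
    (hτ : (τ : E) = -(k1.leadingCoeff / k2.leadingCoeff))
    (p : E[X]) (hp : p.natDegree = τ) (hp0 : p ≠ 0) :
    (k2 * derivative p + k1 * p).degree < ((k1.natDegree + τ : ℕ) : WithBot ℕ) :=
  stmt_16_general k1 k2 hk2 hdeg τ hτ p hp
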